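/- arXiv:1204.1024 — 2 statements merged into one kernel-verified Lean document; each statement's English description precedes it below -/
import Mathlib

section
/- Fix θ > 0, let g be as in the steepest descent analysis, and for fixed y > 0 define h(y,k) = g(θ-y, y) - g(θ-y+k, y). Then h(y,0) = 0, ∂h/∂k (y,k) = -Σ_{n=0}^∞ ( (θ+n)(y² - (k-y)²) + (y-k)³ + y²(y-k) ) / ( (θ+n)² ((θ+n-y+k)² + y²) ), and h(y,·) is strictly decreasing on [0,y]. -/
/-- The digamma function `Ψ(x) = d/dx ln Γ(x)`. -/
noncomputable def digamma (x : ℝ) : ℝ := deriv (fun t => Real.log (Real.Gamma t)) x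

/-- `κ_θ = Ψ'(θ)`. -/
noncomputable def kappa (θ : ℝ) : ℝ := deriv digamma θ

/-- `f_θ = θΨ'(θ) - Ψ(θ)`. -/
noncomputable def fTheta (θ : ℝ) : ℝ := θ * deriv digamma θ - digamma θ

/-- `g(x,y) = Re(ln Γ(x+iy)) + f_θ x - (κ_θ/2)(x² - y²)`. -/
noncomputable def gFun (θ x y : ℝ) : ℝ :=
  (Complex.log (Complex.Gamma ((x : ℂ) + (y : ℂ) * Complex.I))).re
    + fTheta θ * x - kappa θ / 2 * (x ^ 2 - y ^ 2)


/-- `h(y,k) = g(θ-y, y) - g(θ-y+k, y)`. -/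
noncomputable def hFun (θ y k : ℝ) : ℝ := gFun θ (θ - y) y - gFun θ (θ - y + k) y

/-!
Write `x = θ - y + k`. Since `f_θ = θ κ_θ - Ψ(θ)`, the chain rule gives
`∂h/∂k = -(Re Ψ(x + iy) - Ψ(θ) + κ_θ (θ - x))`, where `Re Ψ(x + iy)` is the `x`-derivative of
`log |Γ(x + iy)|`. All three quantities are series. Along a horizontal segment kept away from the
poles, the `x`-derivatives of `log |n^z n! / (z (z+1) ⋯ (z+n))|` converge uniformly, with majorant
`C / (j+1)²`, so Euler's limit formula for `Γ` yields `Re Ψ(z) = -γ + Σ_j (1/(j+1) - Re 1/(z+j))`;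
on the real axis this is also the series of `Ψ`, and differentiating it termwise gives
`κ_θ = Σ_j 1/(θ+j)²`. Adding the three series termwise produces the stated series, whose terms are
positive when `0 < k < y`.
-/

open Filter Topology Finset

lemma summable_one_div_natCast_add_sq (a : ℝ) : Summable (fun j : ℕ => 1 / ((j : ℝ) + a) ^ 2) := by
  have h := (Real.summable_one_div_nat_add_rpow a 2).mpr one_lt_two
  simpa [sq_abs] using h

lemma mul_succ_le_mul_norm_add_natCast {z : ℂ} {δ R : ℝ} (hδ : 0 < δ) (hR : ‖z‖ ≤ R) (j : ℕ)
    (hz : δ ≤ ‖z + j‖) : δ * (j + 1) ≤ (R + 1 + δ) * ‖z + j‖ := by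
  have hj : (j : ℝ) ≤ ‖z + j‖ + ‖z‖ := by
    simpa using norm_sub_le (z + j) z
  nlinarith [norm_nonneg z]

lemma norm_inv_succ_sub_inv_add_le {z : ℂ} {δ R : ℝ} (hδ : 0 < δ) (hR : ‖z‖ ≤ R) (j : ℕ)
    (hz : δ ≤ ‖z + j‖) :
    ‖1 / ((j : ℂ) + 1) - 1 / (z + j)‖ ≤ (R + 1) * (R + 1 + δ) / δ * (1 / ((j : ℝ) + 1) ^ 2) := by
  have hzj : z + j ≠ 0 := norm_pos_iff.mp (hδ.trans_le hz)
  have hj : (j : ℂ) + 1 ≠ 0 := by exact_mod_cast j.succ_ne_zero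
  have hid : 1 / ((j : ℂ) + 1) - 1 / (z + j) = (z - 1) / ((j + 1) * (z + j)) := by
    field_simp; ring
  have hnorm : ‖(j : ℂ) + 1‖ = j + 1 := by exact_mod_cast Complex.norm_natCast (j + 1)
  have hR1 : 0 ≤ R + 1 := by linarith [(norm_nonneg z).trans hR]
  have hratio : 1 ≤ (R + 1 + δ) * ‖z + j‖ / (δ * (j + 1)) := by
    rw [one_le_div (by positivity)]
    exact mul_succ_le_mul_norm_add_natCast hδ hR j hz
  have hrhs : (R + 1) * (R + 1 + δ) / δ * (1 / ((j : ℝ) + 1) ^ 2) * ((j + 1) * ‖z + j‖)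
      = (R + 1) * ((R + 1 + δ) * ‖z + j‖ / (δ * (j + 1))) := by
    field_simp
  rw [hid, norm_div, norm_mul, hnorm, div_le_iff₀ (by positivity), hrhs]
  calc ‖z - 1‖ ≤ R + 1 := (norm_sub_le z 1).trans (by simpa using hR)
    _ ≤ _ := le_mul_of_one_le_right hR1 hratio

lemma summable_re_inv_succ_sub_inv_add {z : ℂ} {δ : ℝ} (hδ : 0 < δ) (hz : ∀ j : ℕ, δ ≤ ‖z + j‖) :
    Summable fun j : ℕ => (1 / ((j : ℂ) + 1) - 1 / (z + j)).re :=
  .of_norm_bounded ((summable_one_div_natCast_add_sq 1).mul_left _) fun j =>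
    (Complex.abs_re_le_norm _).trans (norm_inv_succ_sub_inv_add_le hδ le_rfl j (hz j))

lemma hasDerivAt_log_norm_ofReal_add (w : ℂ) {x : ℝ} (hx : (x : ℂ) + w ≠ 0) :
    HasDerivAt (fun x : ℝ => Real.log ‖(x : ℂ) + w‖) (1 / ((x : ℂ) + w)).re x := by
  have hnormSq : ∀ x : ℝ, Complex.normSq ((x : ℂ) + w) = (x + w.re) ^ 2 + w.im ^ 2 := by
    intro x
    simp only [Complex.normSq_apply, Complex.add_re, Complex.ofReal_re, Complex.add_im,
      Complex.ofReal_im, zero_add]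
    ring
  have hpos : 0 < (x + w.re) ^ 2 + w.im ^ 2 := by
    rw [← hnormSq]; exact Complex.normSq_pos.mpr hx
  have hfun : (fun x : ℝ => Real.log ‖(x : ℂ) + w‖)
      = fun x : ℝ => Real.log ((x + w.re) ^ 2 + w.im ^ 2) / 2 := by
    funext x
    rw [Complex.norm_def, hnormSq, Real.log_sqrt (by positivity)]
  have hquad : HasDerivAt (fun x : ℝ => (x + w.re) ^ 2 + w.im ^ 2) (2 * (x + w.re)) x := by
    simpa using (((hasDerivAt_id x).add_const w.re).pow 2).add_const (w.im ^ 2)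
  rw [hfun, one_div, Complex.inv_re, hnormSq]
  refine ((hquad.log hpos.ne').div_const 2).congr_deriv ?_
  simp only [Complex.add_re, Complex.ofReal_re]
  field_simp

lemma hasDerivAt_log_norm_GammaSeq_expansion (w : ℂ) (n : ℕ) {x : ℝ}
    (hx : ∀ j : ℕ, (x : ℂ) + w + j ≠ 0) :
    HasDerivAt (fun x : ℝ => (x + w.re) * Real.log n + Real.log n.factorial
        - ∑ j ∈ range (n + 1), Real.log ‖(x : ℂ) + w + j‖)
      (Real.log n - harmonic (n + 1)
        + ∑ j ∈ range (n + 1), (1 / ((j : ℂ) + 1) - 1 / ((x : ℂ) + w + j)).re) x := by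
  have hlog : HasDerivAt (fun x : ℝ => ∑ j ∈ range (n + 1), Real.log ‖(x : ℂ) + w + j‖)
      (∑ j ∈ range (n + 1), (1 / ((x : ℂ) + w + j)).re) x :=
    HasDerivAt.fun_sum fun j _ => by
      simpa only [add_assoc] using hasDerivAt_log_norm_ofReal_add (w + j) (by
        simpa only [add_assoc] using hx j)
  have hharm : ((harmonic (n + 1) : ℚ) : ℝ) = ∑ j ∈ range (n + 1), (1 / ((j : ℂ) + 1)).re := by
    have hre : ∀ j : ℕ, ((j : ℂ) + 1)⁻¹.re = ((j : ℝ) + 1)⁻¹ := fun j => by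
      rw [show ((j : ℂ) + 1)⁻¹ = (((j : ℝ) + 1)⁻¹ : ℝ) by push_cast; rfl, Complex.ofReal_re]
    rw [harmonic]
    push_cast
    simp only [one_div, hre]
  refine ((((hasDerivAt_id x).add_const w.re).mul_const (Real.log n)).add_const _
    |>.sub hlog).congr_deriv ?_
  simp only [hharm, Complex.sub_re, sum_sub_distrib]
  ring

lemma log_norm_GammaSeq {s : ℂ} (hs : ∀ j : ℕ, s + j ≠ 0) {n : ℕ} (hn : n ≠ 0) :
    Real.log ‖Complex.GammaSeq s n‖
      = s.re * Real.log n + Real.log n.factorial - ∑ j ∈ range (n + 1), Real.log ‖s + j‖ := by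
  have hn' : (0 : ℝ) < n := by positivity
  have hprod : ∏ j ∈ range (n + 1), ‖s + j‖ ≠ 0 :=
    prod_ne_zero_iff.mpr fun j _ => norm_ne_zero_iff.mpr (hs j)
  rw [Complex.GammaSeq, norm_div, norm_mul, norm_prod,
    Complex.norm_natCast_cpow_of_pos (Nat.pos_of_ne_zero hn), Complex.norm_natCast,
    Real.log_div (by positivity) hprod, Real.log_mul (by positivity) (by positivity),
    Real.log_rpow hn', Real.log_prod fun j _ => norm_ne_zero_iff.mpr (hs j)]

lemma tendsto_log_sub_harmonic_succ :
    Tendsto (fun n : ℕ => Real.log n - harmonic (n + 1)) atTop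
      (𝓝 (-Real.eulerMascheroniConstant)) := by
  have h := Real.tendsto_harmonic_sub_log.neg.sub (tendsto_one_div_add_atTop_nhds_zero_nat (𝕜 := ℝ))
  rw [sub_zero] at h
  refine h.congr fun n => ?_
  rw [harmonic_succ]
  push_cast
  ring

noncomputable def reDigammaSeries (z : ℂ) : ℝ :=
  -Real.eulerMascheroniConstant + ∑' j : ℕ, (1 / ((j : ℂ) + 1) - 1 / (z + j)).re

theorem hasDerivAt_log_norm_Gamma_ofReal_add {w : ℂ} {s : Set ℝ} {δ R x₀ : ℝ} (hs : IsOpen s)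
    (hx₀ : x₀ ∈ s) (hδ : 0 < δ) (hR : ∀ x ∈ s, ‖(x : ℂ) + w‖ ≤ R)
    (hpole : ∀ x ∈ s, ∀ j : ℕ, δ ≤ ‖(x : ℂ) + w + j‖) :
    HasDerivAt (fun x : ℝ => Real.log ‖Complex.Gamma (x + w)‖)
      (reDigammaSeries (x₀ + w)) x₀ := by
  have hne : ∀ x ∈ s, ∀ j : ℕ, (x : ℂ) + w + j ≠ 0 := fun x hx j =>
    norm_pos_iff.mp (hδ.trans_le (hpole x hx j))
  set f : ℕ → ℝ → ℝ := fun n x => (x + w.re) * Real.log n + Real.log n.factorial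
    - ∑ j ∈ range (n + 1), Real.log ‖(x : ℂ) + w + j‖
  set f' : ℕ → ℝ → ℝ := fun n x => (Real.log n - harmonic (n + 1))
    + ∑ j ∈ range (n + 1), (1 / ((j : ℂ) + 1) - 1 / ((x : ℂ) + w + j)).re
  have hderiv : ∀ n, ∀ x ∈ s, HasDerivAt (f n) (f' n x) x := fun n x hx =>
    hasDerivAt_log_norm_GammaSeq_expansion w n (hne x hx)
  have hunif : TendstoUniformlyOn f' (fun x => reDigammaSeries (x + w)) atTop s := by
    have hbound : ∀ j : ℕ, ∀ x ∈ s, ‖(1 / ((j : ℂ) + 1) - 1 / ((x : ℂ) + w + j)).re‖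
        ≤ (R + 1) * (R + 1 + δ) / δ * (1 / ((j : ℝ) + 1) ^ 2) := fun j x hx =>
      (Complex.abs_re_le_norm _).trans
        (norm_inv_succ_sub_inv_add_le hδ (hR x hx) j (hpole x hx j))
    have hseries := tendstoUniformlyOn_tsum_nat
      ((summable_one_div_natCast_add_sq 1).mul_left _) hbound
    exact (tendsto_log_sub_harmonic_succ.tendstoUniformlyOn_const s).add
      fun u hu => (tendsto_add_atTop_nat 1).eventually (hseries u hu)
  have hlim : ∀ x ∈ s, Tendsto (fun n => f n x) atTop (𝓝 (Real.log ‖Complex.Gamma (x + w)‖)) := by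
    intro x hx
    have hG : Complex.Gamma (x + w) ≠ 0 :=
      Complex.Gamma_ne_zero fun m hm => hne x hx m (by rw [hm]; ring)
    refine ((continuous_norm.tendsto _).comp (Complex.GammaSeq_tendsto_Gamma _)).log
      (norm_ne_zero_iff.mpr hG) |>.congr' ?_
    filter_upwards [eventually_ne_atTop 0] with n hn
    simp only [Function.comp_apply, f]
    rw [log_norm_GammaSeq (fun j => hne x hx j) hn]
    simp
  exact hasDerivAt_of_tendstoUniformlyOn hs hunif (Eventually.of_forall hderiv) hlim hx₀

theorem hasDerivAt_log_norm_Gamma_ofReal_add_mul_I {y : ℝ} (hy : y ≠ 0) (x₀ : ℝ) :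
    HasDerivAt (fun x : ℝ => Real.log ‖Complex.Gamma (x + y * Complex.I)‖)
      (reDigammaSeries (x₀ + y * Complex.I)) x₀ := by
  have hR : ∀ x ∈ Set.Ioo (x₀ - 1) (x₀ + 1), ‖(x : ℂ) + y * Complex.I‖ ≤ |x₀| + 1 + |y| := by
    intro x hx
    have hx' : |x| ≤ |x₀| + 1 := abs_le.mpr
      ⟨by linarith [neg_abs_le x₀, hx.1], by linarith [le_abs_self x₀, hx.2]⟩
    calc ‖(x : ℂ) + y * Complex.I‖ ≤ |x| + |y| := (norm_add_le _ _).trans_eq (by simp)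
      _ ≤ |x₀| + 1 + |y| := by linarith
  have hpole : ∀ x ∈ Set.Ioo (x₀ - 1) (x₀ + 1), ∀ j : ℕ,
      |y| ≤ ‖(x : ℂ) + y * Complex.I + j‖ := fun x _ j => by
    simpa using Complex.abs_im_le_norm ((x : ℂ) + y * Complex.I + j)
  exact hasDerivAt_log_norm_Gamma_ofReal_add isOpen_Ioo
    (Set.mem_Ioo.mpr ⟨by linarith, by linarith⟩) (abs_pos.mpr hy) hR hpole

lemma re_inv_natCast_add_one_sub_inv_ofReal_add (t : ℝ) (j : ℕ) :
    (1 / ((j : ℂ) + 1) - 1 / ((t : ℂ) + j)).re = 1 / ((j : ℝ) + 1) - 1 / (t + j) := by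
  rw [show 1 / ((j : ℂ) + 1) - 1 / ((t : ℂ) + j) = ((1 / ((j : ℝ) + 1) - 1 / (t + j) : ℝ) : ℂ) by
    push_cast; rfl, Complex.ofReal_re]

lemma reDigammaSeries_ofReal (t : ℝ) :
    reDigammaSeries t
      = -Real.eulerMascheroniConstant + ∑' j : ℕ, (1 / ((j : ℝ) + 1) - 1 / (t + j)) := by
  simp only [reDigammaSeries, re_inv_natCast_add_one_sub_inv_ofReal_add]

lemma summable_inv_natCast_add_one_sub_inv_add {t : ℝ} (ht : 0 < t) :
    Summable fun j : ℕ => 1 / ((j : ℝ) + 1) - 1 / (t + j) := by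
  refine (summable_re_inv_succ_sub_inv_add (z := t) ht fun j => ?_).congr
    (re_inv_natCast_add_one_sub_inv_ofReal_add t)
  rw [show (t : ℂ) + j = ((t + j : ℝ) : ℂ) by push_cast; rfl, Complex.norm_real, Real.norm_eq_abs,
    abs_of_pos (by positivity)]
  linarith [j.cast_nonneg (α := ℝ)]

theorem hasDerivAt_log_Gamma {t : ℝ} (ht : 0 < t) :
    HasDerivAt (fun x => Real.log (Real.Gamma x)) (reDigammaSeries t) t := by
  have hR : ∀ x ∈ Set.Ioo (t / 2) (2 * t), ‖(x : ℂ) + 0‖ ≤ 2 * t := fun x hx => by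
    rw [add_zero, Complex.norm_real, Real.norm_eq_abs, abs_of_pos (by linarith [hx.1])]
    exact hx.2.le
  have hpole : ∀ x ∈ Set.Ioo (t / 2) (2 * t), ∀ j : ℕ, t / 2 ≤ ‖(x : ℂ) + 0 + j‖ := fun x hx j => by
    rw [add_zero, show (x : ℂ) + j = ((x + j : ℝ) : ℂ) by push_cast; rfl, Complex.norm_real,
      Real.norm_eq_abs, abs_of_pos (by linarith [hx.1, j.cast_nonneg (α := ℝ)])]
    linarith [hx.1, j.cast_nonneg (α := ℝ)]
  have h := hasDerivAt_log_norm_Gamma_ofReal_add isOpen_Ioo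
    (show t ∈ Set.Ioo (t / 2) (2 * t) from ⟨half_lt_self ht, by linarith⟩) (half_pos ht) hR hpole
  simpa [Complex.Gamma_ofReal, Complex.norm_real, Real.log_abs] using h

lemma digamma_eq_reDigammaSeries {t : ℝ} (ht : 0 < t) : digamma t = reDigammaSeries t :=
  (hasDerivAt_log_Gamma ht).deriv

lemma hasSum_kappa {θ : ℝ} (hθ : 0 < θ) : HasSum (fun j : ℕ => 1 / (θ + j) ^ 2) (kappa θ) := by
  have hev : digamma =ᶠ[𝓝 θ]
      fun t => -Real.eulerMascheroniConstant + ∑' j : ℕ, (1 / ((j : ℝ) + 1) - 1 / (t + j)) := by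
    filter_upwards [Ioi_mem_nhds hθ] with t ht
    rw [digamma_eq_reDigammaSeries ht, reDigammaSeries_ofReal]
  have hterm : ∀ (j : ℕ), ∀ t ∈ Set.Ioi (θ / 2),
      HasDerivAt (fun t => 1 / ((j : ℝ) + 1) - 1 / (t + j)) (1 / (t + j) ^ 2) t := by
    intro j t ht
    have hpos : 0 < t + j := by linarith [Set.mem_Ioi.mp ht, j.cast_nonneg (α := ℝ)]
    simpa [one_div, neg_div] using (((hasDerivAt_id t).add_const (j : ℝ)).inv hpos.ne').const_sub
      (1 / ((j : ℝ) + 1))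
  have hbound : ∀ (j : ℕ), ∀ t ∈ Set.Ioi (θ / 2),
      ‖1 / (t + j) ^ 2‖ ≤ 1 / ((j : ℝ) + θ / 2) ^ 2 := by
    intro j t ht
    have hpos : 0 < (j : ℝ) + θ / 2 := by positivity
    rw [Real.norm_of_nonneg (by positivity)]
    exact one_div_le_one_div_of_le (by positivity)
      (pow_le_pow_left₀ hpos.le (by linarith [Set.mem_Ioi.mp ht]) 2)
  have hθmem : θ ∈ Set.Ioi (θ / 2) := Set.mem_Ioi.mpr (by linarith)
  have hderiv := hasDerivAt_tsum_of_isPreconnected (summable_one_div_natCast_add_sq (θ / 2))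
    isOpen_Ioi isPreconnected_Ioi hterm hbound hθmem (summable_inv_natCast_add_one_sub_inv_add hθ)
    hθmem
  rw [kappa, hev.deriv_eq, (hderiv.const_add _).deriv]
  simpa only [add_comm] using (summable_one_div_natCast_add_sq θ).hasSum

lemma re_inv_natCast_add_one_sub_inv_add_mul_I (x y : ℝ) (j : ℕ) :
    (1 / ((j : ℂ) + 1) - 1 / ((x : ℂ) + y * Complex.I + j)).re
      = 1 / ((j : ℝ) + 1) - (x + j) / ((x + j) ^ 2 + y ^ 2) := by
  simp only [Complex.sub_re, one_div, Complex.inv_re, Complex.normSq_apply, Complex.add_re,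
    Complex.natCast_re, Complex.one_re, Complex.add_im, Complex.natCast_im, Complex.one_im,
    add_zero, mul_zero, div_self_mul_self', Complex.ofReal_re, Complex.mul_re, Complex.I_re,
    Complex.ofReal_im, Complex.I_im, mul_one, sub_self, Complex.mul_im, zero_add]
  ring

lemma hasDerivAt_gFun (θ : ℝ) {y : ℝ} (hy : y ≠ 0) (x : ℝ) :
    HasDerivAt (fun x => gFun θ x y)
      (reDigammaSeries (x + y * Complex.I) + fTheta θ - kappa θ * x) x := by
  simp only [gFun, Complex.log_re]
  refine ((hasDerivAt_log_norm_Gamma_ofReal_add_mul_I hy x).add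
    ((hasDerivAt_id x).const_mul (fTheta θ)) |>.sub
    ((((hasDerivAt_id x).pow 2).sub_const (y ^ 2)).const_mul (kappa θ / 2))).congr_deriv ?_
  simp only [mul_one, Nat.cast_ofNat, id_eq, Nat.add_one_sub_one, pow_one, sub_right_inj]
  ring

noncomputable def hDerivSummand (θ y k : ℝ) (n : ℕ) : ℝ :=
  ((θ + n) * (y ^ 2 - (k - y) ^ 2) + (y - k) ^ 3 + y ^ 2 * (y - k))
    / ((θ + n) ^ 2 * ((θ + n - y + k) ^ 2 + y ^ 2))

lemma hasSum_hDerivSummand {θ y : ℝ} (hθ : 0 < θ) (hy : y ≠ 0) (k : ℝ) :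
    HasSum (hDerivSummand θ y k) (reDigammaSeries ((θ - y + k : ℝ) + y * Complex.I)
      - reDigammaSeries θ + (y - k) * kappa θ) := by
  have hz := (summable_re_inv_succ_sub_inv_add (z := (θ - y + k : ℝ) + y * Complex.I)
    (abs_pos.mpr hy) fun j => by
      simpa using Complex.abs_im_le_norm (((θ - y + k : ℝ) : ℂ) + y * Complex.I + j)).hasSum
  have hθs := (summable_inv_natCast_add_one_sub_inv_add hθ).hasSum
  rw [reDigammaSeries_ofReal, reDigammaSeries, add_sub_add_left_eq_sub]
  refine ((hz.sub hθs).add ((hasSum_kappa hθ).mul_left (y - k))).congr_fun fun n => ?_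
  rw [re_inv_natCast_add_one_sub_inv_add_mul_I, hDerivSummand]
  have h1 : (0 : ℝ) < θ + n := by positivity
  have h2 : (0 : ℝ) < (θ - y + k + n) ^ 2 + y ^ 2 := by positivity
  rw [show θ + n - y + k = θ - y + k + n by ring]
  field_simp
  ring

lemma hasDerivAt_hFun {θ y : ℝ} (hθ : 0 < θ) (hy : y ≠ 0) (k : ℝ) :
    HasDerivAt (fun k => hFun θ y k) (-∑' n, hDerivSummand θ y k n) k := by
  have hg := ((hasDerivAt_gFun θ hy (θ - y + k)).comp_const_add (θ - y) k).const_sub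
    (gFun θ (θ - y) y)
  refine hg.congr_deriv ?_
  rw [(hasSum_hDerivSummand hθ hy k).tsum_eq, fTheta, ← kappa, digamma_eq_reDigammaSeries hθ]
  push_cast
  ring

lemma hDerivSummand_pos {θ y k : ℝ} (hθ : 0 < θ) (hk : 0 < k) (hky : k < y) (n : ℕ) :
    0 < hDerivSummand θ y k n := by
  have hy : 0 < y := hk.trans hky
  have hθn : (0 : ℝ) < θ + n := by positivity
  have hyk : 0 < y - k := by linarith
  have hsq : 0 < y ^ 2 - (k - y) ^ 2 := by nlinarith
  have := mul_pos hθn hsq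
  have := pow_pos hyk 3
  have := mul_pos (pow_pos hy 2) hyk
  exact div_pos (by linarith) (by positivity)

/-- For `θ > 0` and fixed `y > 0`: `h(y,0) = 0`, the derivative in `k` is
`-Σ_{n=0}^∞ ((θ+n)(y²-(k-y)²) + (y-k)³ + y²(y-k)) / ((θ+n)²((θ+n-y+k)²+y²))`,
and `h(y,·)` is strictly decreasing on `[0,y]`. -/
theorem hFun_deriv_and_strictAnti (θ : ℝ) (hθ : 0 < θ) (y : ℝ) (hy : 0 < y) :
    hFun θ y 0 = 0
    ∧ (∀ k : ℝ, HasDerivAt (fun k => hFun θ y k)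
        (-(∑' n : ℕ, ((θ + n) * (y ^ 2 - (k - y) ^ 2) + (y - k) ^ 3 + y ^ 2 * (y - k))
            / ((θ + n) ^ 2 * ((θ + n - y + k) ^ 2 + y ^ 2)))) k)
    ∧ StrictAntiOn (fun k => hFun θ y k) (Set.Icc 0 y) := by
  have hderiv := hasDerivAt_hFun hθ hy.ne'
  refine ⟨by simp [hFun], hderiv, ?_⟩
  refine strictAntiOn_of_hasDerivWithinAt_neg (convex_Icc 0 y)
    (fun k _ => (hderiv k).continuousAt.continuousWithinAt)
    (fun k _ => (hderiv k).hasDerivWithinAt) fun k hk => ?_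
  rw [interior_Icc] at hk
  have hpos := hDerivSummand_pos hθ hk.1 hk.2
  exact neg_neg_of_pos ((hasSum_hDerivSummand hθ hy.ne' k).summable.tsum_pos
    (fun n => (hpos n).le) 0 (hpos 0))
end

section
/- Fix θ > 0 and set g̃(X,Y) = g(θ+θX, θY)/θ where g(x,y) = Re(ln Γ(x+iy)) + f_θ x - (κ_θ/2)(x²-y²). Then for every X ≥ 0, ∂g̃/∂Y (X,Y) = Σ_{n=0}^∞ ( θY/(θ+n)² - θY/((θ+θX+n)² + θ²Y²) ), which is zero at Y=0 and strictly positive for Y > 0; in particular Y ↦ g̃(X,Y) is strictly increasing on (0,∞). Moreover ∂g̃/∂Y (X,Y) ≥ ∂g̃/∂Y (0,Y) = Σ_{n=0}^∞ θ³Y³ / ( (θ+n)² ((θ+n)² + θ²Y²) ). -/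
/-- The rescaled function `g̃(X,Y) = g(θ+θX, θY)/θ`. -/
noncomputable def gTilde (θ X Y : ℝ) : ℝ := gFun θ (θ + θ * X) (θ * Y) / θ

/-- The series `Σ_{n=0}^∞ ( θY/(θ+n)² - θY/((θ+θX+n)² + θ²Y²) )` for `∂g̃/∂Y`. -/
noncomputable def gTildeDerivSeries (θ X Y : ℝ) : ℝ :=
  ∑' n : ℕ, (θ * Y / (θ + n) ^ 2 - θ * Y / ((θ + θ * X + n) ^ 2 + θ ^ 2 * Y ^ 2))

/-!
Both series come from Euler's limit formula for `Γ`. Taking logarithms in it gives, for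
`x > 0`, `log Γ(x) + log x = Σ (x (log (n+2) - log (n+1)) - (log (x+n+1) - log (n+1)))`;
differentiating twice termwise yields the trigamma series `κ_θ = Ψ'(θ) = Σ 1/(θ+n)²`.
Comparing `|Γ(x+iy)|` with `Γ(x)` factor by factor in the same formula gives
`Re log Γ(x+iy) = log Γ(x) - ½ Σ log (1 + y²/(x+n)²)`, whose `y`-derivative is
`-Σ y/((x+n)² + y²)`. Hence `∂g̃/∂Y = κ_θ θY - Σ θY/((θ+θX+n)² + θ²Y²)`, which is the stated
series; for `Y > 0` each of its terms is positive and increasing in `X`, because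
`(θ+n)² ≤ (θ+θX+n)² < (θ+θX+n)² + θ²Y²`.
-/

open Real Filter Topology Finset
open scoped Nat

lemma summable_one_div_add_sq (a : ℝ) : Summable fun n : ℕ => 1 / (a + n) ^ 2 :=
  ((summable_one_div_nat_add_rpow a 2).2 one_lt_two).congr fun n => by
    rw [rpow_two, sq_abs, add_comm]

lemma summable_div_add_sq_add (b : ℝ) {a c : ℝ} (ha : 0 < a) (hc : 0 ≤ c) :
    Summable fun n : ℕ => b / ((a + n) ^ 2 + c) := by
  refine ((summable_one_div_add_sq a).mul_left |b|).of_norm_bounded fun n => ?_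
  have hpos : 0 < (a + n) ^ 2 := by positivity
  rw [norm_div, Real.norm_eq_abs, Real.norm_eq_abs, abs_of_pos (add_pos_of_pos_of_nonneg hpos hc),
    ← div_eq_mul_one_div]
  exact div_le_div_of_nonneg_left (abs_nonneg b) hpos (le_add_of_nonneg_right hc)

lemma summable_div_nat_add_one_sq (C : ℝ) : Summable fun n : ℕ => C / ((n : ℝ) + 1) ^ 2 :=
  ((summable_one_div_add_sq 1).mul_left C).congr fun n => by rw [add_comm, mul_one_div]

lemma inv_add_one_le_log_add_one_sub_log {k : ℝ} (hk : 0 < k) :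
    (k + 1)⁻¹ ≤ log (k + 1) - log k := by
  have h := one_sub_inv_le_log_of_pos (div_pos (by linarith : 0 < k + 1) hk)
  rw [log_div (by positivity) hk.ne', inv_div] at h
  convert h using 1
  field_simp
  ring

lemma log_add_one_sub_log_le_inv {k : ℝ} (hk : 0 < k) :
    log (k + 1) - log k ≤ k⁻¹ := by
  have h := log_le_sub_one_of_pos (div_pos (by linarith : 0 < k + 1) hk)
  rw [log_div (by positivity) hk.ne'] at h
  convert h using 1
  field_simp
  ring

noncomputable def logGammaTerm (x : ℝ) (n : ℕ) : ℝ :=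
  x * (log (n + 2) - log (n + 1)) - (log (x + n + 1) - log (n + 1))

noncomputable def digammaTerm (x : ℝ) (n : ℕ) : ℝ :=
  log (n + 2) - log (n + 1) - (x + n + 1)⁻¹

lemma hasDerivAt_logGammaTerm {x : ℝ} (n : ℕ) (hx : x + n + 1 ≠ 0) :
    HasDerivAt (logGammaTerm · n) (digammaTerm x n) x := by
  have hlog : HasDerivAt (fun y : ℝ => log (y + n + 1)) (x + n + 1)⁻¹ x := by
    simpa using (((hasDerivAt_id x).add_const (n : ℝ)).add_const 1).log hx
  unfold logGammaTerm digammaTerm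
  exact (((hasDerivAt_id' x).mul_const _).sub (hlog.sub_const _)).congr_deriv (by ring)

lemma hasDerivAt_digammaTerm {x : ℝ} (n : ℕ) (hx : x + n + 1 ≠ 0) :
    HasDerivAt (digammaTerm · n) ((x + n + 1) ^ 2)⁻¹ x := by
  unfold digammaTerm
  exact ((((hasDerivAt_id' x).add_const _).add_const 1).inv hx).const_sub _ |>.congr_deriv
    (by field_simp)

lemma abs_digammaTerm_le {x B : ℝ} (hx : 0 ≤ x) (hxB : x ≤ B) (n : ℕ) :
    |digammaTerm x n| ≤ (B + 1) / (n + 1) ^ 2 := by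
  have hk : (0 : ℝ) < n + 1 := by positivity
  have hlow := inv_add_one_le_log_add_one_sub_log hk
  have hup := log_add_one_sub_log_le_inv hk
  rw [show (n : ℝ) + 1 + 1 = n + 2 by ring] at hlow hup
  have hinv : (x + n + 1)⁻¹ ≤ ((n : ℝ) + 1)⁻¹ := inv_anti₀ hk (by linarith)
  have above : ((n : ℝ) + 1)⁻¹ - (x + n + 1)⁻¹ ≤ (B + 1) / (n + 1) ^ 2 := by
    rw [inv_sub_inv (by positivity) (by positivity),
      div_le_div_iff₀ (by positivity) (by positivity)]
    nlinarith [mul_nonneg (mul_nonneg hx hk.le) hx, mul_nonneg (by linarith : 0 ≤ B + 1 - x)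
      (mul_nonneg hk.le (by positivity : (0 : ℝ) ≤ x + n + 1))]
  have below : ((n : ℝ) + 1)⁻¹ - ((n : ℝ) + 2)⁻¹ ≤ (B + 1) / (n + 1) ^ 2 := by
    rw [inv_sub_inv (by positivity) (by positivity),
      div_le_div_iff₀ (by positivity) (by positivity)]
    nlinarith [mul_nonneg (by linarith : 0 ≤ B) (by positivity : (0 : ℝ) ≤ (n + 1) * (n + 2))]
  rw [abs_le, digammaTerm]
  constructor <;> linarith

lemma logGammaTerm_one (n : ℕ) : logGammaTerm 1 n = 0 := by
  rw [logGammaTerm, one_mul, show (1 : ℝ) + n + 1 = n + 2 by ring, sub_self]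

lemma sum_range_logGammaTerm (x : ℝ) (N : ℕ) :
    ∑ n ∈ range N, logGammaTerm x n
      = BohrMollerup.logGammaSeq x N + log x + x * (log (N + 1) - log N) := by
  induction N with
  | zero => simp [BohrMollerup.logGammaSeq]
  | succ N ih =>
    have hfact : log ((N + 1)! : ℝ) = log (N + 1) + log (N ! : ℝ) := by
      rw [Nat.factorial_succ, Nat.cast_mul, log_mul (by positivity) (by positivity)]
      push_cast; ring
    rw [sum_range_succ, ih]
    simp only [BohrMollerup.logGammaSeq, hfact, sum_range_succ (n := N + 1), logGammaTerm]
    push_cast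
    ring_nf

/- All terms vanish at `x = 1`, and the summable bound on their derivatives propagates
summability to every `x > 0`. -/
lemma summable_logGammaTerm {x : ℝ} (hx : 0 < x) : Summable (logGammaTerm x) :=
  summable_of_summable_hasDerivAt_of_isPreconnected (g := fun n y => logGammaTerm y n)
    (summable_div_nat_add_one_sq (x + 2 + 1)) isOpen_Ioo (convex_Ioo 0 (x + 2)).isPreconnected
    (fun n y hy => hasDerivAt_logGammaTerm n (by linarith [hy.1]))
    (fun n y hy => abs_digammaTerm_le hy.1.le hy.2.le n)
    (y₀ := 1) ⟨one_pos, by linarith⟩ (by simp [logGammaTerm_one]) ⟨hx, by linarith⟩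

lemma hasDerivAt_tsum_logGammaTerm {x : ℝ} (hx : 0 < x) :
    HasDerivAt (fun z => ∑' n, logGammaTerm z n) (∑' n, digammaTerm x n) x :=
  hasDerivAt_tsum_of_isPreconnected (g := fun n y => logGammaTerm y n)
    (summable_div_nat_add_one_sq (x + 2 + 1)) isOpen_Ioo (convex_Ioo 0 (x + 2)).isPreconnected
    (fun n y hy => hasDerivAt_logGammaTerm n (by linarith [hy.1]))
    (fun n y hy => abs_digammaTerm_le hy.1.le hy.2.le n)
    (y₀ := 1) ⟨one_pos, by linarith⟩ (by simp [logGammaTerm_one]) ⟨hx, by linarith⟩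

lemma hasSum_logGammaTerm {x : ℝ} (hx : 0 < x) :
    HasSum (logGammaTerm x) (log (Gamma x) + log x) := by
  refine (summable_logGammaTerm hx).hasSum_iff_tendsto_nat.2 ?_
  simp_rw [sum_range_logGammaTerm]
  simpa using ((BohrMollerup.tendsto_log_gamma hx).add_const (log x)).add
    (tendsto_log_nat_add_one_sub_log.const_mul x)

lemma hasDerivAt_log_Gamma_s18 {x : ℝ} (hx : 0 < x) :
    HasDerivAt (fun t => log (Gamma t)) (∑' n, digammaTerm x n - x⁻¹) x := by
  refine ((hasDerivAt_tsum_logGammaTerm hx).sub (hasDerivAt_log hx.ne')).congr_of_eventuallyEq ?_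
  filter_upwards [Ioi_mem_nhds hx] with t ht
  rw [Pi.sub_apply, (hasSum_logGammaTerm ht).tsum_eq]
  ring

lemma hasDerivAt_digamma {x : ℝ} (hx : 0 < x) :
    HasDerivAt digamma (∑' n : ℕ, 1 / (x + n) ^ 2) x := by
  have hterms :
      HasDerivAt (fun z => ∑' n, digammaTerm z n) (∑' n : ℕ, ((x + n + 1) ^ 2)⁻¹) x := by
    refine hasDerivAt_tsum_of_isPreconnected (g := fun n y => digammaTerm y n)
      (summable_div_nat_add_one_sq 1) isOpen_Ioi (convex_Ioi 0).isPreconnected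
      (fun n y (hy : 0 < y) => hasDerivAt_digammaTerm n (by positivity))
      (fun n y (hy : 0 < y) => ?_)
      hx (.of_norm_bounded (summable_div_nat_add_one_sq (x + 1))
        fun n => abs_digammaTerm_le hx.le le_rfl n) hx
    rw [norm_inv, norm_pow, Real.norm_eq_abs, abs_of_pos (by positivity), ← one_div]
    gcongr
    linarith
  refine ((hterms.sub (hasDerivAt_inv hx.ne')).congr_deriv ?_).congr_of_eventuallyEq ?_
  · rw [(summable_one_div_add_sq x).tsum_eq_zero_add]
    push_cast
    simp only [add_zero, one_div, add_assoc]
    ring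
  · filter_upwards [Ioi_mem_nhds hx] with t ht using (hasDerivAt_log_Gamma_s18 ht).deriv

lemma kappa_eq_tsum {θ : ℝ} (hθ : 0 < θ) : kappa θ = ∑' n : ℕ, 1 / (θ + n) ^ 2 :=
  (hasDerivAt_digamma hθ).deriv

lemma summable_log_one_add_sq_div (x y : ℝ) :
    Summable fun n : ℕ => log (1 + y ^ 2 / (x + n) ^ 2) :=
  Real.summable_log_one_add_of_summable <|
    ((summable_one_div_add_sq x).mul_left (y ^ 2)).congr fun _ => mul_one_div _ _

lemma norm_GammaSeq_sq_mul_prod {x : ℝ} (hx : 0 < x) (y : ℝ) {n : ℕ} (hn : n ≠ 0) :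
    ‖Complex.GammaSeq (x + y * Complex.I) n‖ ^ 2
        * ∏ j ∈ range (n + 1), (1 + y ^ 2 / (x + j) ^ 2) = Real.GammaSeq x n ^ 2 := by
  have hfactor (j : ℕ) :
      ‖(x + y * Complex.I : ℂ) + j‖ ^ 2 = (x + j) ^ 2 * (1 + y ^ 2 / (x + j) ^ 2) := by
    have : (x + y * Complex.I : ℂ) + j = ((x + j : ℝ) : ℂ) + y * Complex.I := by
      push_cast; ring
    rw [this, Complex.sq_norm, Complex.normSq_add_mul_I]
    field_simp
  have hre : ((x : ℂ) + y * Complex.I).re = x := by simp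
  simp only [Complex.GammaSeq, Real.GammaSeq, norm_div, norm_mul, norm_prod, div_pow, mul_pow,
    ← prod_pow, hfactor, prod_mul_distrib, Complex.norm_natCast,
    Complex.norm_natCast_cpow_of_pos (Nat.pos_of_ne_zero hn), hre]
  field_simp

lemma re_log_Gamma_eq {x : ℝ} (hx : 0 < x) (y : ℝ) :
    (Complex.log (Complex.Gamma (x + y * Complex.I))).re
      = log (Gamma x) - (∑' n : ℕ, log (1 + y ^ 2 / (x + n) ^ 2)) / 2 := by
  set z : ℂ := x + y * Complex.I
  have hΓ : Complex.Gamma z ≠ 0 := Complex.Gamma_ne_zero_of_re_pos (by simpa [z] using hx)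
  have hlim : Tendsto (fun n => log (Real.GammaSeq x n)
      - (∑ j ∈ range (n + 1), log (1 + y ^ 2 / (x + j) ^ 2)) / 2) atTop
      (𝓝 (log (Gamma x) - (∑' n : ℕ, log (1 + y ^ 2 / (x + n) ^ 2)) / 2)) :=
    ((Real.GammaSeq_tendsto_Gamma x).log (Gamma_pos_of_pos hx).ne').sub <|
      (((summable_log_one_add_sq_div x y).hasSum.tendsto_sum_nat).comp
        (tendsto_add_atTop_nat 1)).div_const 2
  rw [Complex.log_re]
  refine tendsto_nhds_unique ?_ hlim
  refine (((Complex.GammaSeq_tendsto_Gamma z).norm).log (norm_ne_zero_iff.2 hΓ)).congr' ?_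
  filter_upwards [eventually_ne_atTop 0] with n hn
  have hprod : 0 < ∏ j ∈ range (n + 1), (1 + y ^ 2 / (x + j) ^ 2) :=
    prod_pos fun j _ => by positivity
  have hGammaSeq : 0 < Real.GammaSeq x n := by
    have : (0 : ℝ) < n := Nat.cast_pos.2 (Nat.pos_of_ne_zero hn)
    unfold Real.GammaSeq
    positivity
  have hfactors := norm_GammaSeq_sq_mul_prod hx y hn
  have hnorm : ‖Complex.GammaSeq z n‖ ^ 2 ≠ 0 := fun h0 => by
    rw [h0, zero_mul] at hfactors
    exact (pow_pos hGammaSeq 2).ne hfactors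
  have h := congrArg log hfactors
  rw [log_mul hnorm hprod.ne', log_pow, log_pow, log_prod fun j _ => by positivity] at h
  linarith

lemma hasDerivAt_log_one_add_sq_div {c : ℝ} (hc : 0 < c) (y : ℝ) :
    HasDerivAt (fun y => log (1 + y ^ 2 / c)) (2 * y / (c + y ^ 2)) y := by
  have h := (((hasDerivAt_pow 2 y).div_const c).const_add 1).log (by positivity)
  exact h.congr_deriv (by field_simp; ring)

lemma abs_two_mul_div_add_sq_le {c y R : ℝ} (hc : 0 < c) (hy : |y| ≤ R) :
    |2 * y / (c + y ^ 2)| ≤ 2 * R * (1 / c) := by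
  rw [abs_div, abs_mul, abs_two, abs_of_pos (show 0 < c + y ^ 2 by positivity),
    ← div_eq_mul_one_div]
  calc 2 * |y| / (c + y ^ 2) ≤ 2 * |y| / c :=
        div_le_div_of_nonneg_left (by positivity) hc (le_add_of_nonneg_right (sq_nonneg y))
    _ ≤ 2 * R / c := by gcongr

lemma hasDerivAt_tsum_log_one_add_sq_div {x : ℝ} (hx : 0 < x) (y : ℝ) :
    HasDerivAt (fun y => ∑' n : ℕ, log (1 + y ^ 2 / (x + n) ^ 2))
      (∑' n : ℕ, 2 * y / ((x + n) ^ 2 + y ^ 2)) y := by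
  obtain ⟨R, hyR⟩ : ∃ R, |y| < R := ⟨|y| + 1, lt_add_one _⟩
  have hR : 0 < R := (abs_nonneg y).trans_lt hyR
  exact hasDerivAt_tsum_of_isPreconnected
    (g := fun (n : ℕ) (y : ℝ) => log (1 + y ^ 2 / (x + n) ^ 2))
    ((summable_one_div_add_sq x).mul_left (2 * R)) isOpen_Ioo (convex_Ioo (-R) R).isPreconnected
    (fun n z _ => hasDerivAt_log_one_add_sq_div (by positivity) z)
    (fun n z hz => abs_two_mul_div_add_sq_le (by positivity) (abs_le.2 ⟨hz.1.le, hz.2.le⟩))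
    (y₀ := 0) ⟨neg_lt_zero.2 hR, hR⟩ (by simp) (abs_lt.1 hyR)

lemma hasDerivAt_re_log_Gamma_vertical {x : ℝ} (hx : 0 < x) (y : ℝ) :
    HasDerivAt (fun y : ℝ => (Complex.log (Complex.Gamma (x + y * Complex.I))).re)
      (-∑' n : ℕ, y / ((x + n) ^ 2 + y ^ 2)) y := by
  simp_rw [re_log_Gamma_eq hx]
  refine ((hasDerivAt_tsum_log_one_add_sq_div hx y).div_const 2).const_sub _ |>.congr_deriv ?_
  simp_rw [mul_div_assoc, tsum_mul_left]
  ring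

lemma hasDerivAt_gFun_vertical (θ : ℝ) {x : ℝ} (hx : 0 < x) (y : ℝ) :
    HasDerivAt (gFun θ x) (kappa θ * y - ∑' n : ℕ, y / ((x + n) ^ 2 + y ^ 2)) y := by
  have hquad := ((hasDerivAt_pow 2 y).const_sub (x ^ 2)).const_mul (kappa θ / 2)
  exact ((hasDerivAt_re_log_Gamma_vertical hx y).add_const (fTheta θ * x)).sub hquad
    |>.congr_deriv (by push_cast; ring)

lemma gTildeDerivSeries_eq {θ X : ℝ} (hθ : 0 < θ) (hX : -1 < X) (Y : ℝ) :
    gTildeDerivSeries θ X Y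
      = kappa θ * (θ * Y) - ∑' n : ℕ, θ * Y / ((θ + θ * X + n) ^ 2 + (θ * Y) ^ 2) := by
  have ha : 0 < θ + θ * X := by nlinarith
  rw [gTildeDerivSeries, Summable.tsum_sub, kappa_eq_tsum hθ, ← tsum_mul_right]
  · simp_rw [mul_pow, one_div_mul_eq_div]
  · exact ((summable_one_div_add_sq θ).mul_left (θ * Y)).congr fun _ => mul_one_div _ _
  · exact summable_div_add_sq_add (θ * Y) ha (by positivity)

lemma hasDerivAt_gTilde {θ X : ℝ} (hθ : 0 < θ) (hX : -1 < X) (Y : ℝ) :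
    HasDerivAt (gTilde θ X) (gTildeDerivSeries θ X Y) Y := by
  have ha : 0 < θ + θ * X := by nlinarith
  have h := ((hasDerivAt_gFun_vertical θ ha (θ * Y)).comp Y
    ((hasDerivAt_id' Y).const_mul θ)).div_const θ
  refine h.congr_deriv ?_
  rw [gTildeDerivSeries_eq hθ hX]
  field_simp

lemma summable_gTildeDerivSeries_summand {θ X : ℝ} (hθ : 0 < θ) (hX : -1 < X) (Y : ℝ) :
    Summable fun n : ℕ =>
      θ * Y / (θ + n) ^ 2 - θ * Y / ((θ + θ * X + n) ^ 2 + θ ^ 2 * Y ^ 2) := by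
  have ha : 0 < θ + θ * X := by nlinarith
  exact (((summable_one_div_add_sq θ).mul_left (θ * Y)).congr fun _ => mul_one_div _ _).sub
    (summable_div_add_sq_add (θ * Y) ha (by positivity))

lemma gTildeDerivSeries_pos {θ X Y : ℝ} (hθ : 0 < θ) (hX : 0 ≤ X) (hY : 0 < Y) :
    0 < gTildeDerivSeries θ X Y := by
  have hterm (n : ℕ) :
      0 < θ * Y / (θ + n) ^ 2 - θ * Y / ((θ + θ * X + n) ^ 2 + θ ^ 2 * Y ^ 2) := by
    have hden : (θ + n) ^ 2 < (θ + θ * X + n) ^ 2 + θ ^ 2 * Y ^ 2 := by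
      have : (θ + n) ^ 2 ≤ (θ + θ * X + n) ^ 2 := by gcongr; nlinarith
      nlinarith [pow_pos (mul_pos hθ hY) 2]
    exact sub_pos.2 (div_lt_div_of_pos_left (by positivity) (by positivity) hden)
  exact (summable_gTildeDerivSeries_summand hθ (by linarith) Y).tsum_pos (fun n => (hterm n).le) 0
    (hterm 0)

lemma monotoneOn_gTildeDerivSeries {θ Y : ℝ} (hθ : 0 < θ) (hY : 0 ≤ Y) :
    MonotoneOn (gTildeDerivSeries θ · Y) (Set.Ioi (-1)) := by
  intro X₁ hX₁ X₂ hX₂ hX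
  refine (summable_gTildeDerivSeries_summand hθ hX₁ Y).tsum_le_tsum (fun n => ?_)
    (summable_gTildeDerivSeries_summand hθ hX₂ Y)
  have ha : 0 < θ + θ * X₁ + n := by
    have : 0 < θ + θ * X₁ := by nlinarith [Set.mem_Ioi.1 hX₁]
    positivity
  gcongr

lemma gTildeDerivSeries_zero_left {θ : ℝ} (hθ : 0 < θ) (Y : ℝ) :
    gTildeDerivSeries θ 0 Y
      = ∑' n : ℕ, θ ^ 3 * Y ^ 3 / ((θ + n) ^ 2 * ((θ + n) ^ 2 + θ ^ 2 * Y ^ 2)) := by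
  refine tsum_congr fun n => ?_
  have : 0 < θ + n := by positivity
  field_simp
  ring

lemma strictMonoOn_gTilde {θ X : ℝ} (hθ : 0 < θ) (hX : 0 ≤ X) :
    StrictMonoOn (gTilde θ X) (Set.Ioi 0) := by
  have hD := hasDerivAt_gTilde hθ (by linarith : -1 < X)
  refine strictMonoOn_of_deriv_pos (convex_Ioi 0)
    (fun Y _ => (hD Y).continuousAt.continuousWithinAt) fun Y hY => ?_
  rw [interior_Ioi] at hY
  exact (hD Y).deriv ▸ gTildeDerivSeries_pos hθ hX hY

/-- For `θ > 0` and `X ≥ 0`: `∂g̃/∂Y` equals the series, which vanishes at `Y = 0` and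
is strictly positive for `Y > 0`, so `Y ↦ g̃(X,Y)` is strictly increasing on `(0,∞)`;
moreover `∂g̃/∂Y(X,Y) ≥ ∂g̃/∂Y(0,Y) = Σ θ³Y³/((θ+n)²((θ+n)²+θ²Y²))` for `Y ≥ 0`. -/
theorem gTilde_vertical_deriv (θ : ℝ) (hθ : 0 < θ) (X : ℝ) (hX : 0 ≤ X) :
    (∀ Y : ℝ, HasDerivAt (fun Y => gTilde θ X Y) (gTildeDerivSeries θ X Y) Y)
    ∧ gTildeDerivSeries θ X 0 = 0
    ∧ (∀ Y : ℝ, 0 < Y → 0 < gTildeDerivSeries θ X Y)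
    ∧ StrictMonoOn (fun Y => gTilde θ X Y) (Set.Ioi 0)
    ∧ (∀ Y : ℝ, 0 ≤ Y → gTildeDerivSeries θ 0 Y ≤ gTildeDerivSeries θ X Y)
    ∧ (∀ Y : ℝ, gTildeDerivSeries θ 0 Y
        = ∑' n : ℕ, θ ^ 3 * Y ^ 3 / ((θ + n) ^ 2 * ((θ + n) ^ 2 + θ ^ 2 * Y ^ 2))) :=
  ⟨hasDerivAt_gTilde hθ (by linarith), by simp [gTildeDerivSeries],
    fun _ hY => gTildeDerivSeries_pos hθ hX hY, strictMonoOn_gTilde hθ hX,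
    fun _ hY => monotoneOn_gTildeDerivSeries hθ hY (by norm_num : (-1 : ℝ) < 0)
      (by linarith : (-1 : ℝ) < X) hX,
    gTildeDerivSeries_zero_left hθ⟩
end
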